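/- Fix any action i ∈ {1,…,N}. For any deterministic losses ℓ_{j,t} ∈ [0,1] and any realization of the perturbation steps X_{j,t} ∈ {−1/2, +1/2}, if for every t ≥ 1 the action I_t minimizes L_{j,t−1} + Z_{j,t} over j (where Z_{j,t} = Σ_{s=1}^t X_{j,s}, L_{j,t} = Σ_{s=1}^t ℓ_{j,s}, L_{j,0} = 0), then Σ_{t=1}^n ℓ_{I_t,t} − L_{i,n} ≤ 2·|{2 ≤ t ≤ n+1 : I_{t−1} ≠ I_t}| + Z_{i,n+1} − Σ_{t=1}^{n+1} X_{I_{t−1},t}, where in the last sum for t = 1 one sets I_0 = I_1. -/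

import Mathlib

/-!
Follow-the-perturbed-leader is analysed through the potential `F t j = L j (t-1) + Z j t`,
which `I t` minimizes. Be-the-leader: the increments of `F` collected along the leaders
`I t` sum to at most the final potential of any fixed action. The algorithm actually pays
the increments at `I (t-1)`; these differ from those at `I t` only at switches, and then by
at most `2`, because every increment lies in `[-1/2, 3/2]`.
-/

open Finset

section FollowTheLeader

variable {α : Type*} (I : ℕ → α)

theorem sum_increment_at_minimizer_le (F : ℕ → α → ℝ) (hF0 : ∀ j, 0 ≤ F 0 j)
    (hI : ∀ t, 1 ≤ t → ∀ j, F t (I t) ≤ F t j) (T : ℕ) (j : α) :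
    ∑ t ∈ Icc 1 T, (F t (I t) - F (t - 1) (I t)) ≤ F T j := by
  induction T generalizing j with
  | zero => simpa using hF0 j
  | succ T ih =>
    rw [sum_Icc_succ_top (by omega), Nat.add_sub_cancel]
    linarith [ih (I (T + 1)), hI (T + 1) (by omega) j]

variable [DecidableEq α]

theorem sum_le_sum_add_mul_card_switches (Δ : ℕ → α → ℝ) (c : ℝ)
    (s : Finset ℕ) (hΔ : ∀ t ∈ s, ∀ j k, Δ t j - Δ t k ≤ c) :
    ∑ t ∈ s, Δ t (I (t - 1))
      ≤ ∑ t ∈ s, Δ t (I t) + c * #(s.filter fun t => I (t - 1) ≠ I t) := by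
  have hcard : c * #(s.filter fun t => I (t - 1) ≠ I t)
      = ∑ t ∈ s, if I (t - 1) ≠ I t then c else 0 := by
    rw [← sum_filter, sum_const, nsmul_eq_mul, mul_comm]
  rw [hcard, ← sum_add_distrib]
  refine sum_le_sum fun t ht => ?_
  by_cases hswitch : I (t - 1) = I t
  · simp [hswitch]
  · rw [if_pos hswitch]
    linarith [hΔ t ht (I (t - 1)) (I t)]

theorem filter_Icc_one_switches_eq (hI0 : I 0 = I 1) (m : ℕ) :
    (Icc 1 m).filter (fun t => I (t - 1) ≠ I t)
      = (Icc 2 m).filter (fun t => I (t - 1) ≠ I t) := by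
  ext t
  simp only [mem_filter, mem_Icc]
  refine and_congr_left fun hne => and_congr_left fun _ => ⟨fun ht1 => ?_, by omega⟩
  rcases ht1.eq_or_lt with rfl | ht1
  · exact absurd hI0 hne
  · exact ht1

end FollowTheLeader

section PartialSums

variable {M : Type*}

theorem sum_Icc_one_sub_sum_Icc_one_pred [AddCommGroup M] (f : ℕ → M) (t : ℕ) :
    ∑ s ∈ Icc 1 t, f s - ∑ s ∈ Icc 1 (t - 1), f s = if t = 0 then 0 else f t := by
  rcases t with _ | t
  · simp
  · rw [sum_Icc_succ_top (by omega), Nat.add_sub_cancel, add_sub_cancel_left, if_neg (by omega)]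

theorem sum_Icc_one_ite_pred_eq [AddCommMonoid M] (f : ℕ → M) (n : ℕ) :
    ∑ t ∈ Icc 1 (n + 1), (if t - 1 = 0 then 0 else f (t - 1)) = ∑ t ∈ Icc 1 n, f t := by
  induction n with
  | zero => simp
  | succ n ih =>
    rw [sum_Icc_succ_top (by omega), ih, sum_Icc_succ_top (by omega), if_neg (by omega),
      Nat.add_sub_cancel]

end PartialSums

theorem fpl_regret_le_switches_deterministic_general
    (N n : ℕ)
    (ℓ : Fin N → ℕ → ℝ) (hℓ : ∀ j t, ℓ j t ∈ Set.Icc (0:ℝ) 1)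
    (X : Fin N → ℕ → ℝ) (hX : ∀ j t, X j t = 1/2 ∨ X j t = -(1/2))
    (Z : Fin N → ℕ → ℝ) (hZ : ∀ j t, Z j t = ∑ s ∈ Finset.Icc 1 t, X j s)
    (L : Fin N → ℕ → ℝ) (hL : ∀ j t, L j t = ∑ s ∈ Finset.Icc 1 t, ℓ j s)
    (I : ℕ → Fin N) (hI0 : I 0 = I 1)
    (hI : ∀ t, 1 ≤ t → ∀ j, L (I t) (t-1) + Z (I t) t ≤ L j (t-1) + Z j t)
    (i : Fin N) :
    (∑ t ∈ Finset.Icc 1 n, ℓ (I t) t) - L i n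
      ≤ 2 * (((Finset.Icc 2 (n+1)).filter (fun t => I (t-1) ≠ I t)).card : ℝ)
        + Z i (n+1) - ∑ t ∈ Finset.Icc 1 (n+1), X (I (t-1)) t := by
  set F : ℕ → Fin N → ℝ := fun t j => L j (t - 1) + Z j t
  set Δ : ℕ → Fin N → ℝ := fun t j => (if t - 1 = 0 then 0 else ℓ j (t - 1)) + X j t
  have hincr : ∀ t ∈ Icc 1 (n + 1), ∀ j, F t j - F (t - 1) j = Δ t j := by
    intro t ht j
    have hL' := sum_Icc_one_sub_sum_Icc_one_pred (ℓ j) (t - 1)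
    have hZ' := sum_Icc_one_sub_sum_Icc_one_pred (X j) t
    rw [← hL, ← hL] at hL'
    rw [← hZ, ← hZ, if_neg (Nat.one_le_iff_ne_zero.1 (mem_Icc.1 ht).1)] at hZ'
    simp only [F, Δ]
    linarith
  have hspread : ∀ t ∈ Icc 1 (n + 1), ∀ j k, Δ t j - Δ t k ≤ 2 := by
    intro t _ j k
    have hXj : X j t ≤ 1 / 2 := by rcases hX j t with h | h <;> linarith
    have hXk : -(1 / 2) ≤ X k t := by rcases hX k t with h | h <;> linarith
    simp only [Δ]
    split_ifs <;> linarith [(hℓ j (t - 1)).2, (hℓ k (t - 1)).1]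
  have hleader := sum_increment_at_minimizer_le I F (by simp [F, hL, hZ]) hI (n + 1) i
  rw [sum_congr rfl fun t ht => hincr t ht (I t)] at hleader
  have hswitch := sum_le_sum_add_mul_card_switches I Δ 2 _ hspread
  have hpaid : ∑ t ∈ Icc 1 (n + 1), Δ t (I (t - 1))
      = ∑ t ∈ Icc 1 n, ℓ (I t) t + ∑ t ∈ Icc 1 (n + 1), X (I (t - 1)) t := by
    simp only [Δ, sum_add_distrib, sum_Icc_one_ite_pred_eq (fun t => ℓ (I t) t)]
  simp only [F, Nat.add_sub_cancel] at hleader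
  rw [hpaid, filter_Icc_one_switches_eq I hI0] at hswitch
  linarith

/-- Deterministic "be-the-leader"-style lemma: for any losses in `[0,1]`,
any ±1/2 perturbation steps, and any selector `I` that follows the perturbed
leader, the regret against action `i` is bounded by twice the number of
switches plus `Z_{i,n+1} - ∑_{t=1}^{n+1} X_{I_{t-1},t}` (with `I 0 = I 1`). -/
theorem fpl_regret_le_switches_deterministic
    (N n : ℕ) (hN : 1 ≤ N)
    (ℓ : Fin N → ℕ → ℝ) (hℓ : ∀ j t, ℓ j t ∈ Set.Icc (0:ℝ) 1)
    (X : Fin N → ℕ → ℝ) (hX : ∀ j t, X j t = 1/2 ∨ X j t = -(1/2))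
    (Z : Fin N → ℕ → ℝ) (hZ : ∀ j t, Z j t = ∑ s ∈ Finset.Icc 1 t, X j s)
    (L : Fin N → ℕ → ℝ) (hL : ∀ j t, L j t = ∑ s ∈ Finset.Icc 1 t, ℓ j s)
    (I : ℕ → Fin N) (hI0 : I 0 = I 1)
    (hI : ∀ t, 1 ≤ t → ∀ j, L (I t) (t-1) + Z (I t) t ≤ L j (t-1) + Z j t)
    (i : Fin N) :
    (∑ t ∈ Finset.Icc 1 n, ℓ (I t) t) - L i n
      ≤ 2 * (((Finset.Icc 2 (n+1)).filter (fun t => I (t-1) ≠ I t)).card : ℝ)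
        + Z i (n+1) - ∑ t ∈ Finset.Icc 1 (n+1), X (I (t-1)) t :=
  fpl_regret_le_switches_deterministic_general N n ℓ hℓ X hX Z hZ L hL I hI0 hI i
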